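/- There exists a real constant ε₀ > 0 such that for every real ε with 0 < ε < ε₀, every simple graph G on a finite vertex set, every nontrivial cluster C of the agreement decomposition of G with parameter ε/10^14, and every vertex u ∈ C, it holds that |N(u) ∩ C| ≥ (1 − ε/10^13)·|C|. -/

import Mathlib

open scoped symmDiff Classical

/-- Two vertices `u, v` are in `ε`-agreement in `G` if
`|N(u) △ N(v)| < ε·max(|N(u)|, |N(v)|)`. -/
def InAgreement {V : Type*} [Fintype V] [DecidableEq V]
    (G : SimpleGraph V) [DecidableRel G.Adj] (ε : ℝ) (u v : V) : Prop :=
  ((G.neighborFinset u ∆ G.neighborFinset v).card : ℝ) <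
    ε * (max (G.neighborFinset u).card (G.neighborFinset v).card : ℕ)

/-- A vertex is `ε`-heavy if it is in `ε`-agreement with more than a
`(1 − ε)`-fraction of its neighbors. -/
noncomputable def Heavy {V : Type*} [Fintype V] [DecidableEq V]
    (G : SimpleGraph V) [DecidableRel G.Adj] (ε : ℝ) (u : V) : Prop :=
  (1 - ε) * ((G.neighborFinset u).card : ℝ) <
    (((G.neighborFinset u).filter (fun v => InAgreement G ε u v)).card : ℝ)

/-- The graph `G̃` obtained from `G` by deleting every edge whose endpoints are
not in `ε`-agreement and then every remaining edge both of whose endpoints are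
`ε`-light. -/
noncomputable def tildeGraph {V : Type*} [Fintype V] [DecidableEq V]
    (G : SimpleGraph V) [DecidableRel G.Adj] (ε : ℝ) : SimpleGraph V where
  Adj u v := G.Adj u v ∧ InAgreement G ε u v ∧ (Heavy G ε u ∨ Heavy G ε v)
  symm := ⟨by
    intro u v ⟨h1, h2, h3⟩
    refine ⟨h1.symm, ?_, h3.symm⟩
    unfold InAgreement at h2 ⊢
    rwa [symmDiff_comm, max_comm]⟩
  loopless := ⟨fun u h => G.irrefl h.1⟩

/-- `C` is a cluster of the agreement decomposition of `G` with parameter `ε`: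
the vertex set of a connected component of `G̃`. -/
noncomputable def IsCluster {V : Type*} [Fintype V] [DecidableEq V]
    (G : SimpleGraph V) [DecidableRel G.Adj] (ε : ℝ) (C : Finset V) : Prop :=
  ∃ v : V, C = Finset.univ.filter (fun w => (tildeGraph G ε).Reachable v w)

/-!
Anchor the cluster at a heavy vertex `h₀` incident to an edge of `G̃`; the two endpoints of that
edge lie in each other's neighbourhoods but not their own, so agreement forces `δ · deg h₀ ≥ 1`.
Two heavy vertices whose neighbourhoods are `7δ`-close share so many neighbours that some vertex is
in `δ`-agreement with both, which brings them back to `3δ`-closeness. Since every edge of `G̃` has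
a heavy endpoint, this can be propagated along paths of `G̃`, and every vertex of the cluster ends
up `5δ`-close to `h₀`. Hence every vertex of the cluster is adjacent to almost all of the
`(1 - δ) · deg h₀` agreeing neighbours of `h₀`, which lie in the cluster; conversely each agreeing
neighbour of `h₀` has at most about `δ · deg h₀` neighbours outside `N(h₀)`, so double counting
leaves room for only `O(δ · deg h₀)` cluster vertices outside `N(h₀) ∪ {h₀}`.
-/

open Finset

theorem Finset.card_le_card_inter_add_card_symmDiff {α : Type*} [DecidableEq α]
    {s t u : Finset α} (hu : u ⊆ s) : #u ≤ #(u ∩ t) + #(s ∆ t) := by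
  rw [← card_inter_add_card_sdiff u t]
  gcongr
  intro x hx
  rw [mem_sdiff] at hx
  exact mem_symmDiff.mpr (Or.inl ⟨hu hx.1, hx.2⟩)

theorem Finset.card_symmDiff_le {α : Type*} [DecidableEq α] (s t u : Finset α) :
    #(s ∆ u) ≤ #(s ∆ t) + #(t ∆ u) :=
  (card_le_card (symmDiff_triangle s t u)).trans (card_union_le _ _)

section Agreement

variable {V : Type*} [Fintype V] [DecidableEq V] {G : SimpleGraph V} [DecidableRel G.Adj]
  {a b c δ : ℝ} {u v w : V}

variable (G) in
def nbrDist (u v : V) : ℕ := #(G.neighborFinset u ∆ G.neighborFinset v)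

variable (G) in
def Near (c : ℝ) (u v : V) : Prop :=
  (nbrDist G u v : ℝ) ≤ c * max (G.degree u : ℝ) (G.degree v)

variable (G) in
noncomputable def agreeingNeighborFinset (δ : ℝ) (u : V) : Finset V :=
  {v ∈ G.neighborFinset u | InAgreement G δ u v}

theorem nbrDist_comm (u v : V) : nbrDist G u v = nbrDist G v u := by
  rw [nbrDist, nbrDist, symmDiff_comm]

theorem degree_le_card_inter_add_nbrDist (u v : V) :
    G.degree u ≤ #(G.neighborFinset u ∩ G.neighborFinset v) + nbrDist G u v := by
  rw [← G.card_neighborFinset_eq_degree]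
  exact card_le_card_inter_add_card_symmDiff subset_rfl

theorem degree_le_degree_add_nbrDist (u v : V) : G.degree v ≤ G.degree u + nbrDist G u v := by
  have h₁ := degree_le_card_inter_add_nbrDist (G := G) v u
  have h₂ := card_le_card (inter_subset_right (s₁ := G.neighborFinset v) (s₂ := G.neighborFinset u))
  rw [G.card_neighborFinset_eq_degree] at h₂
  rw [nbrDist_comm] at h₁
  omega

theorem two_le_nbrDist (h : G.Adj u v) : 2 ≤ nbrDist G u v := by
  have hsub : {u, v} ⊆ G.neighborFinset u ∆ G.neighborFinset v := by
    intro x hx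
    rcases mem_insert.mp hx with rfl | hx
    · simp [mem_symmDiff, h.symm]
    · simp [mem_singleton.mp hx, mem_symmDiff, h]
  simpa [nbrDist, card_pair h.ne] using card_le_card hsub

theorem inAgreement_iff :
    InAgreement G δ u v ↔ (nbrDist G u v : ℝ) < δ * max (G.degree u : ℝ) (G.degree v) := by
  simp only [InAgreement, nbrDist, G.card_neighborFinset_eq_degree, Nat.cast_max]

theorem InAgreement.near (h : InAgreement G δ u v) : Near G δ u v :=
  (inAgreement_iff.mp h).le

theorem InAgreement.symm (h : InAgreement G δ u v) : InAgreement G δ v u := by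
  rw [inAgreement_iff, nbrDist_comm, max_comm]
  exact inAgreement_iff.mp h

theorem near_self (hc : 0 ≤ c) (u : V) : Near G c u u := by
  simp only [Near, nbrDist, symmDiff_self, bot_eq_empty, card_empty, Nat.cast_zero]
  positivity

theorem Near.one_sub_mul_max_le (h : Near G c u v) :
    (1 - c) * max (G.degree u : ℝ) (G.degree v) ≤ G.degree u := by
  have hv : (G.degree v : ℝ) ≤ G.degree u + nbrDist G u v := by
    exact_mod_cast degree_le_degree_add_nbrDist u v
  have hmax : max (G.degree u : ℝ) (G.degree v) ≤ G.degree u + nbrDist G u v :=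
    max_le (le_add_of_nonneg_right (Nat.cast_nonneg _)) hv
  unfold Near at h
  linarith

theorem Near.one_sub_mul_nbrDist_le (h : Near G c u v) (hc0 : 0 ≤ c) (hc1 : c ≤ 1) :
    (1 - c) * nbrDist G u v ≤ c * G.degree u :=
  calc (1 - c) * nbrDist G u v ≤ (1 - c) * (c * max (G.degree u : ℝ) (G.degree v)) :=
        mul_le_mul_of_nonneg_left h (by linarith)
    _ = c * ((1 - c) * max (G.degree u : ℝ) (G.degree v)) := by ring
    _ ≤ c * G.degree u := by gcongr; exact h.one_sub_mul_max_le

/-- The factor `1 - a` pays for `deg v`, which may exceed `max (deg u) (deg w)` by `1 / (1 - a)`. -/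
theorem Near.trans (ha : 0 ≤ a) (hb : 0 ≤ b) (ha1 : a < 1) (habc : a + b ≤ (1 - a) * c)
    (h₁ : Near G a u v) (h₂ : Near G b v w) : Near G c u w := by
  set M := max (G.degree u : ℝ) (G.degree w)
  have hM : 0 ≤ M := le_max_of_le_left (Nat.cast_nonneg _)
  have hm₁ : (1 - a) * max (G.degree u : ℝ) (G.degree v) ≤ M :=
    h₁.one_sub_mul_max_le.trans (le_max_left _ _)
  have hm₂ : (1 - a) * max (G.degree v : ℝ) (G.degree w) ≤ M := by
    rw [mul_max_of_nonneg _ _ (by linarith)]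
    refine max_le ?_ ?_
    · exact (mul_le_mul_of_nonneg_left (le_max_right _ _) (by linarith)).trans hm₁
    · nlinarith [le_max_right (G.degree u : ℝ) (G.degree w),
        (Nat.cast_nonneg _ : (0 : ℝ) ≤ G.degree w)]
  have htri : (nbrDist G u w : ℝ) ≤ nbrDist G u v + nbrDist G v w := by
    exact_mod_cast card_symmDiff_le _ _ _
  refine le_of_mul_le_mul_left ?_ (sub_pos.mpr ha1)
  calc (1 - a) * nbrDist G u w
      ≤ (1 - a) * (a * max (G.degree u : ℝ) (G.degree v) +
          b * max (G.degree v : ℝ) (G.degree w)) :=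
        mul_le_mul_of_nonneg_left (htri.trans (add_le_add h₁ h₂)) (by linarith)
    _ = a * ((1 - a) * max (G.degree u : ℝ) (G.degree v)) +
          b * ((1 - a) * max (G.degree v : ℝ) (G.degree w)) := by ring
    _ ≤ (a + b) * M := by nlinarith
    _ ≤ (1 - a) * (c * M) := by nlinarith

theorem InAgreement.one_le_mul_degree (hadj : G.Adj u v) (h : InAgreement G δ u v)
    (hδ : δ ≤ 1 / 2) : 1 ≤ δ * G.degree u := by
  have h2 : (2 : ℝ) ≤ nbrDist G u v := by exact_mod_cast two_le_nbrDist hadj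
  have hlt := inAgreement_iff.mp h
  have hmax := h.near.one_sub_mul_max_le
  have hM : (0 : ℝ) ≤ max (G.degree u : ℝ) (G.degree v) := le_max_of_le_left (Nat.cast_nonneg _)
  have hδ0 : 0 ≤ δ := by
    by_contra! hneg
    nlinarith
  nlinarith [mul_le_mul_of_nonneg_left hmax hδ0]

theorem heavy_iff : Heavy G δ u ↔ (1 - δ) * G.degree u < #(agreeingNeighborFinset G δ u) := by
  simp only [Heavy, agreeingNeighborFinset, G.card_neighborFinset_eq_degree]

theorem card_agreeingNeighborFinset_le (δ : ℝ) (u : V) :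
    #(agreeingNeighborFinset G δ u) ≤ G.degree u :=
  (card_filter_le _ _).trans_eq (G.card_neighborFinset_eq_degree u)

theorem Heavy.degree_pos (h : Heavy G δ u) : 0 < G.degree u := by
  rw [heavy_iff] at h
  have := card_agreeingNeighborFinset_le (G := G) δ u
  by_contra! h0
  have : G.degree u = 0 := by omega
  simp_all

theorem Heavy.card_sdiff_agreeingNeighborFinset_lt (h : Heavy G δ u) :
    (#(G.neighborFinset u \ agreeingNeighborFinset G δ u) : ℝ) < δ * G.degree u := by
  have hsplit :=
    card_sdiff_add_card_eq_card (filter_subset (InAgreement G δ u) (G.neighborFinset u))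
  rw [G.card_neighborFinset_eq_degree] at hsplit
  have : (#(G.neighborFinset u \ agreeingNeighborFinset G δ u) : ℝ) +
      #(agreeingNeighborFinset G δ u) = G.degree u := by exact_mod_cast hsplit
  linarith [heavy_iff.mp h]

theorem Heavy.one_sub_mul_degree_sub_nbrDist_lt (H : Heavy G δ u) (w : V) :
    (1 - δ) * G.degree u - nbrDist G u w <
      #(G.neighborFinset w ∩ agreeingNeighborFinset G δ u) := by
  have h : #(agreeingNeighborFinset G δ u) ≤
      #(G.neighborFinset w ∩ agreeingNeighborFinset G δ u) + nbrDist G u w := by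
    rw [inter_comm]
    exact card_le_card_inter_add_card_symmDiff (filter_subset _ _)
  have h' : (#(agreeingNeighborFinset G δ u) : ℝ) ≤
      #(G.neighborFinset w ∩ agreeingNeighborFinset G δ u) + nbrDist G u w := by
    exact_mod_cast h
  linarith [heavy_iff.mp H]

theorem exists_inAgreement_of_heavy {h₁ h₂ : V} (H₁ : Heavy G δ h₁) (H₂ : Heavy G δ h₂)
    (hcommon : δ * G.degree h₁ + δ * G.degree h₂ <
      #(G.neighborFinset h₁ ∩ G.neighborFinset h₂)) :
    ∃ y, InAgreement G δ h₁ y ∧ InAgreement G δ h₂ y := by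
  by_contra! hnone
  have hsub : G.neighborFinset h₁ ∩ G.neighborFinset h₂ ⊆
      (G.neighborFinset h₁ \ agreeingNeighborFinset G δ h₁) ∪
        (G.neighborFinset h₂ \ agreeingNeighborFinset G δ h₂) := by
    intro y hy
    rw [mem_inter] at hy
    simp only [mem_union, mem_sdiff, agreeingNeighborFinset, mem_filter]
    by_cases hy₁ : InAgreement G δ h₁ y
    · exact Or.inr ⟨hy.2, fun h => hnone y hy₁ h.2⟩
    · exact Or.inl ⟨hy.1, fun h => hy₁ h.2⟩
  have hcard : (#(G.neighborFinset h₁ ∩ G.neighborFinset h₂) : ℝ) ≤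
      #(G.neighborFinset h₁ \ agreeingNeighborFinset G δ h₁) +
        #(G.neighborFinset h₂ \ agreeingNeighborFinset G δ h₂) := by
    exact_mod_cast (card_le_card hsub).trans (card_union_le _ _)
  linarith [H₁.card_sdiff_agreeingNeighborFinset_lt, H₂.card_sdiff_agreeingNeighborFinset_lt]

/-- The two vertices share so many neighbours that some vertex is in `δ`-agreement with both. -/
theorem Heavy.near_of_near {h₁ h₂ : V} (H₁ : Heavy G δ h₁) (H₂ : Heavy G δ h₂) (hδ0 : 0 ≤ δ)
    (hδ : δ ≤ 1 / 10) (h : Near G (7 * δ) h₁ h₂) : Near G (3 * δ) h₁ h₂ := by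
  set M := max (G.degree h₁ : ℝ) (G.degree h₂)
  have hM : 0 < M := lt_max_of_lt_left (by exact_mod_cast H₁.degree_pos)
  have hinter : M - nbrDist G h₁ h₂ ≤ #(G.neighborFinset h₁ ∩ G.neighborFinset h₂) := by
    have e₁ : (G.degree h₁ : ℝ) ≤
        #(G.neighborFinset h₁ ∩ G.neighborFinset h₂) + nbrDist G h₁ h₂ := by
      exact_mod_cast degree_le_card_inter_add_nbrDist h₁ h₂
    have e₂ : (G.degree h₂ : ℝ) ≤
        #(G.neighborFinset h₂ ∩ G.neighborFinset h₁) + nbrDist G h₂ h₁ := by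
      exact_mod_cast degree_le_card_inter_add_nbrDist h₂ h₁
    rw [inter_comm, nbrDist_comm] at e₂
    exact sub_le_iff_le_add.mpr (max_le e₁ e₂)
  obtain ⟨y, hy₁, hy₂⟩ := exists_inAgreement_of_heavy H₁ H₂ (by
    unfold Near at h
    nlinarith [le_max_left (G.degree h₁ : ℝ) (G.degree h₂),
      le_max_right (G.degree h₁ : ℝ) (G.degree h₂)])
  exact hy₁.near.trans hδ0 hδ0 (by linarith) (by nlinarith) hy₂.symm.near

theorem card_mul_le_card_mul_of_disjoint_neighborFinset {A B : Finset V} {m n : ℝ}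
    (hB : Disjoint B (G.neighborFinset u)) (hBA : ∀ w ∈ B, m ≤ #(G.neighborFinset w ∩ A))
    (hA : ∀ y ∈ A, (nbrDist G u y : ℝ) ≤ n) : #B * m ≤ #A * n := by
  have hAbove : ∀ w, A.bipartiteAbove G.Adj w = G.neighborFinset w ∩ A := fun w => by
    ext y
    simp [mem_bipartiteAbove, and_comm]
  simpa only [nsmul_eq_mul] using card_nsmul_le_card_nsmul (s := B) (t := A) G.Adj
    (fun w hw => hAbove w ▸ hBA w hw)
    (fun y hy => by
      refine le_trans ?_ (hA y hy)
      refine Nat.cast_le.mpr (card_le_card fun z hz => ?_)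
      rw [mem_bipartiteBelow] at hz
      rw [mem_symmDiff, G.mem_neighborFinset, G.mem_neighborFinset]
      exact Or.inr ⟨hz.2.symm, fun hzu =>
        disjoint_left.mp hB hz.1 ((G.mem_neighborFinset _ _).mpr hzu)⟩)

theorem Heavy.one_sub_mul_card_le {B : Finset V} (H : Heavy G δ u) (hδ0 : 0 ≤ δ)
    (hδ : δ ≤ 1 / 2) (hB : Disjoint B (G.neighborFinset u))
    (hfar : ∀ w ∈ B, (nbrDist G u w : ℝ) ≤ 6 * δ * G.degree u) :
    (1 - 7 * δ) * #B ≤ 2 * δ * G.degree u := by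
  have hD : (0 : ℝ) < G.degree u := Nat.cast_pos.mpr H.degree_pos
  have hAD : (#(agreeingNeighborFinset G δ u) : ℝ) ≤ G.degree u :=
    Nat.cast_le.mpr (card_agreeingNeighborFinset_le δ u)
  have hcount := card_mul_le_card_mul_of_disjoint_neighborFinset
    (m := (1 - 7 * δ) * G.degree u) (n := 2 * δ * G.degree u) hB
    (fun w hw => by linarith [hfar w hw, H.one_sub_mul_degree_sub_nbrDist_lt w])
    (fun y hy => by
      have := (mem_filter.mp hy).2.near.one_sub_mul_nbrDist_le hδ0 (by linarith)
      nlinarith)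
  refine le_of_mul_le_mul_left ?_ hD
  nlinarith [mul_le_mul_of_nonneg_right hAD (by positivity : (0 : ℝ) ≤ 2 * δ * G.degree u)]

/-- The witness `h'` is always a heavy endpoint of an edge of `G̃`, which is what allows
`Heavy.near_of_near` to restore the constant `3δ` at every step. -/
theorem exists_near_of_tildeGraph_adj {h₀ h x y : V} (H₀ : Heavy G δ h₀) (hδ0 : 0 ≤ δ)
    (hδ : δ ≤ 1 / 21) (h₀h : Near G (3 * δ) h₀ h) (hx : Near G δ h x)
    (hxy : (tildeGraph G δ).Adj x y) :
    ∃ h', Near G (3 * δ) h₀ h' ∧ Near G δ h' y := by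
  obtain ⟨-, hagr, Hx | Hy⟩ := hxy
  · have h₀x : Near G (7 * δ) h₀ x :=
      h₀h.trans (by positivity) hδ0 (by linarith) (by nlinarith) hx
    exact ⟨x, H₀.near_of_near Hx hδ0 (by linarith) h₀x, hagr.near⟩
  · have hy : Near G (3 * δ) h y := hx.trans hδ0 hδ0 (by linarith) (by nlinarith) hagr.near
    have h₀y : Near G (7 * δ) h₀ y :=
      h₀h.trans (by positivity) (by positivity) (by linarith) (by nlinarith) hy
    exact ⟨y, H₀.near_of_near Hy hδ0 (by linarith) h₀y, near_self hδ0 y⟩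

theorem Heavy.near_of_reachable_tildeGraph {h₀ : V} (H₀ : Heavy G δ h₀) (hδ0 : 0 ≤ δ)
    (hδ : δ ≤ 1 / 21) (hr : (tildeGraph G δ).Reachable h₀ w) : Near G (5 * δ) h₀ w := by
  suffices ∃ h, Near G (3 * δ) h₀ h ∧ Near G δ h w by
    obtain ⟨h, h₀h, hw⟩ := this
    exact h₀h.trans (by positivity) hδ0 (by linarith) (by nlinarith) hw
  rw [SimpleGraph.reachable_iff_reflTransGen] at hr
  induction hr with
  | refl => exact ⟨h₀, near_self (by positivity) h₀, near_self hδ0 h₀⟩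
  | tail _ hxy ih =>
    obtain ⟨h, h₀h, hx⟩ := ih
    exact exists_near_of_tildeGraph_adj H₀ hδ0 hδ h₀h hx hxy

theorem IsCluster.mem_iff_reachable {C : Finset V} (hC : IsCluster G δ C) (hu : u ∈ C) :
    w ∈ C ↔ (tildeGraph G δ).Reachable u w := by
  obtain ⟨v, rfl⟩ := hC
  simp only [mem_filter, mem_univ, true_and] at hu ⊢
  exact ⟨hu.symm.trans, hu.trans⟩

theorem IsCluster.exists_heavy_adj {C : Finset V} (hC : IsCluster G δ C) (hC1 : 1 < #C)
    (hu : u ∈ C) : ∃ h ∈ C, Heavy G δ h ∧ ∃ x, (tildeGraph G δ).Adj h x := by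
  obtain ⟨w, hwC, hwu⟩ := exists_mem_ne hC1 u
  obtain ⟨p⟩ := (hC.mem_iff_reachable hu).mp hwC
  have hadj := p.adj_snd (SimpleGraph.Walk.not_nil_of_ne hwu.symm)
  rcases hadj.2.2 with Hu | Hx
  · exact ⟨u, hu, Hu, _, hadj⟩
  · exact ⟨_, (hC.mem_iff_reachable hu).mpr hadj.reachable, Hx, u, hadj.symm⟩

theorem IsCluster.one_sub_mul_card_le {C : Finset V} (hC : IsCluster G δ C) (hC1 : 1 < #C)
    (hu : u ∈ C) (hδ0 : 0 ≤ δ) (hδ : δ ≤ 1 / 30) :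
    (1 - 10 * δ) * #C ≤ #(G.neighborFinset u ∩ C) := by
  obtain ⟨h₀, h₀C, H₀, x, hx⟩ := hC.exists_heavy_adj hC1 hu
  set D : ℝ := (G.degree h₀ : ℝ)
  have hD : 1 ≤ δ * D := hx.2.1.one_le_mul_degree hx.1 (by linarith)
  have hfar : ∀ w ∈ C, (nbrDist G h₀ w : ℝ) ≤ 6 * δ * D := fun w hw => by
    have := (H₀.near_of_reachable_tildeGraph hδ0 (by linarith)
      ((hC.mem_iff_reachable h₀C).mp hw)).one_sub_mul_nbrDist_le (by positivity) (by linarith)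
    nlinarith
  have hAC : agreeingNeighborFinset G δ h₀ ⊆ C := fun y hy => by
    rw [agreeingNeighborFinset, mem_filter, G.mem_neighborFinset] at hy
    exact (hC.mem_iff_reachable h₀C).mpr (SimpleGraph.Adj.reachable ⟨hy.1, hy.2, Or.inl H₀⟩)
  have hnbr : (1 - 7 * δ) * D ≤ #(G.neighborFinset u ∩ C) := by
    have : (#(G.neighborFinset u ∩ agreeingNeighborFinset G δ h₀) : ℝ) ≤
        #(G.neighborFinset u ∩ C) := by
      exact_mod_cast card_le_card (inter_subset_inter_left hAC)
    linarith [hfar u hu, H₀.one_sub_mul_degree_sub_nbrDist_lt u]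
  set B := C \ insert h₀ (G.neighborFinset h₀)
  have hB : (1 - 7 * δ) * #B ≤ 2 * δ * D :=
    H₀.one_sub_mul_card_le hδ0 (by linarith)
      (disjoint_sdiff_self_left.mono_right (subset_insert _ _)) fun w hw => hfar w (sdiff_subset hw)
  have hCB : (#C : ℝ) ≤ #B + D + 1 := by
    have h₁ : #C ≤ #B + #(insert h₀ (G.neighborFinset h₀)) := card_le_card_sdiff_add_card
    have h₂ := card_insert_le h₀ (G.neighborFinset h₀)
    rw [G.card_neighborFinset_eq_degree] at h₂
    show (#C : ℝ) ≤ #B + (G.degree h₀ : ℝ) + 1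
    exact_mod_cast (by omega : #C ≤ #B + G.degree h₀ + 1)
  nlinarith [mul_le_mul_of_nonneg_left hCB (by linarith : (0 : ℝ) ≤ 1 - 10 * δ)]

end Agreement

/-- For every nontrivial cluster `C` of the agreement decomposition with
parameter `ε/10^14` and every `u ∈ C`, `|N(u) ∩ C| ≥ (1 − ε/10^13)·|C|`. -/
theorem cluster_nbr_inter_cluster_large :
    ∃ ε₀ : ℝ, 0 < ε₀ ∧
      ∀ (V : Type) (_ : Fintype V) (_ : DecidableEq V)
        (G : SimpleGraph V) (_ : DecidableRel G.Adj) (ε : ℝ), 0 < ε → ε < ε₀ →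
        ∀ C : Finset V, IsCluster G (ε / 10 ^ 14) C → 1 < C.card →
          ∀ u ∈ C,
            (1 - ε / 10 ^ 13) * (C.card : ℝ) ≤
              ((G.neighborFinset u ∩ C).card : ℝ) := by
  refine ⟨1, one_pos, fun V _ _ G _ ε hε hε1 C hC hC1 u hu => ?_⟩
  have h := hC.one_sub_mul_card_le hC1 hu (by positivity) (by linarith)
  convert h using 2
  ring
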